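/- Let n, k, b be integers with 1 ≤ k-1 ≤ b ≤ n and b ≥ k. Then the diameter of the graph G_{n,k,b} equals ⌈(n-k+1)/(b-k+1)⌉. -/

import Mathlib

/-!
Put `c = b - k + 1`. If `X` and `Y` are adjacent, `X ∪ Y` lies in a window of length `b`
and `Y` has `k` elements, so `min Y ≤ min X + c`: along a walk the minimum grows by at most
`c` per step. Hence the intervals `[0, k-1]` and `[n-k+1, n]` are at distance at least
`⌈(n-k+1)/c⌉`. Conversely, from any `X` one reaches any `Y` with `min X ≤ min Y` through the
intervals `[s, s+k-1]`, advancing `s` by `c` at each step; once `max Y ≤ min X + b` a single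
edge suffices.
-/

/-- The maximum element of a finite set of naturals (`0` for the empty set). -/
def fmax (X : Finset ℕ) : ℕ := WithBot.unbotD 0 X.max

/-- The minimum element of a finite set of naturals (`0` for the empty set). -/
def fmin (X : Finset ℕ) : ℕ := WithTop.untopD 0 X.min

/-- The vertex set `V_{n,k,b}`: all `k`-element subsets `X` of `{0,…,n}`
with `max X - min X ≤ b`. -/
def Vnkb (n k b : ℕ) : Finset (Finset ℕ) :=
  ((Finset.range (n + 1)).powersetCard k).filter (fun X => fmax X - fmin X ≤ b)

/-- The graph `G_{n,k,b}`: two distinct vertices `X, Y` are adjacent iff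
`max (X ∪ Y) - min (X ∪ Y) ≤ b`. -/
def Gnkb (n k b : ℕ) : SimpleGraph (Vnkb n k b) where
  Adj X Y := X ≠ Y ∧ fmax (X.1 ∪ Y.1) - fmin (X.1 ∪ Y.1) ≤ b
  symm := by
    constructor
    rintro X Y ⟨h1, h2⟩
    exact ⟨h1.symm, by rwa [Finset.union_comm]⟩
  loopless := by constructor; rintro X ⟨h1, -⟩; exact h1 rfl

/-- The bandwidth of a finite graph: the minimum over all bijective labellings of the
vertices by `{0, …, |V|-1}` (equivalently `{1, …, |V|}`) of the maximal absolute
label difference along an edge. -/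
noncomputable def bandwidth {V : Type*} [Fintype V] (G : SimpleGraph V) : ℕ :=
  sInf {m : ℕ | ∃ f : V ≃ Fin (Fintype.card V),
    ∀ u v : V, G.Adj u v → (((f u : ℕ) : ℤ) - ((f v : ℕ) : ℤ)).natAbs ≤ m}

section fmax_fmin

variable {X Y : Finset ℕ}

lemma fmax_eq_max' (h : X.Nonempty) : fmax X = X.max' h := by
  simp [fmax, ← Finset.coe_max' h]

lemma fmin_eq_min' (h : X.Nonempty) : fmin X = X.min' h := by
  rw [fmin, ← Finset.coe_min' h]; rfl

lemma subset_Icc_fmin_fmax (h : X.Nonempty) : X ⊆ Finset.Icc (fmin X) (fmax X) := by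
  intro x hx
  rw [Finset.mem_Icc, fmin_eq_min' h, fmax_eq_max' h]
  exact ⟨X.min'_le x hx, X.le_max' x hx⟩

lemma fmax_union (hX : X.Nonempty) (hY : Y.Nonempty) :
    fmax (X ∪ Y) = max (fmax X) (fmax Y) := by
  rw [fmax_eq_max' (hX.mono Finset.subset_union_left), fmax_eq_max' hX, fmax_eq_max' hY]
  exact Finset.max'_union hX hY

lemma fmin_union (hX : X.Nonempty) (hY : Y.Nonempty) :
    fmin (X ∪ Y) = min (fmin X) (fmin Y) := by
  rw [fmin_eq_min' (hX.mono Finset.subset_union_left), fmin_eq_min' hX, fmin_eq_min' hY]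
  exact Finset.min'_union hX hY

lemma fmax_Icc {s t : ℕ} (h : s ≤ t) : fmax (Finset.Icc s t) = t := by
  rw [fmax_eq_max' (Finset.nonempty_Icc.2 h)]
  exact le_antisymm (Finset.max'_le _ _ _ fun y hy => (Finset.mem_Icc.1 hy).2)
    (Finset.le_max' _ _ (Finset.right_mem_Icc.2 h))

lemma fmin_Icc {s t : ℕ} (h : s ≤ t) : fmin (Finset.Icc s t) = s := by
  rw [fmin_eq_min' (Finset.nonempty_Icc.2 h)]
  exact le_antisymm (Finset.min'_le _ _ (Finset.left_mem_Icc.2 h))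
    (Finset.le_min' _ _ _ fun y hy => (Finset.mem_Icc.1 hy).1)

end fmax_fmin

namespace Vnkb

variable {n k b : ℕ} {X : Finset ℕ}

lemma nonempty (hk : 0 < k) (hX : X ∈ Vnkb n k b) : X.Nonempty := by
  simp only [Vnkb, Finset.mem_filter, Finset.mem_powersetCard] at hX
  rw [← Finset.card_pos, hX.1.2]
  exact hk

lemma fmax_le (hk : 0 < k) (hX : X ∈ Vnkb n k b) : fmax X ≤ n := by
  have hne := nonempty hk hX
  simp only [Vnkb, Finset.mem_filter, Finset.mem_powersetCard] at hX
  rw [fmax_eq_max' hne, ← Nat.lt_succ_iff, Finset.max'_lt_iff]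
  exact fun x hx => Finset.mem_range.1 (hX.1.1 hx)

lemma fmax_le_fmin_add (hX : X ∈ Vnkb n k b) : fmax X ≤ fmin X + b := by
  simp only [Vnkb, Finset.mem_filter] at hX
  omega

lemma fmin_add_le_fmax (hk : 0 < k) (hX : X ∈ Vnkb n k b) : fmin X + k ≤ fmax X + 1 := by
  have hcard := Finset.card_le_card (subset_Icc_fmin_fmax (nonempty hk hX))
  simp only [Vnkb, Finset.mem_filter, Finset.mem_powersetCard] at hX
  rw [hX.1.2, Nat.card_Icc] at hcard
  omega

lemma Icc_mem (hk : 0 < k) {s t : ℕ} (hst : s + k = t + 1) (ht : t ≤ n) (hb : t ≤ s + b) :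
    Finset.Icc s t ∈ Vnkb n k b := by
  simp only [Vnkb, Finset.mem_filter, Finset.mem_powersetCard, Nat.card_Icc]
  rw [fmax_Icc (by omega), fmin_Icc (by omega)]
  refine ⟨⟨fun x hx => Finset.mem_range.2 ?_, by omega⟩, by omega⟩
  have := (Finset.mem_Icc.1 hx).2
  omega

end Vnkb

namespace Gnkb

variable {n k b : ℕ} {X Y : Vnkb n k b}

lemma adj_iff (hk : 0 < k) :
    (Gnkb n k b).Adj X Y ↔ X ≠ Y ∧ fmax Y.1 ≤ fmin X.1 + b ∧ fmax X.1 ≤ fmin Y.1 + b := by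
  have hX := Vnkb.nonempty hk X.2
  have hY := Vnkb.nonempty hk Y.2
  have := Vnkb.fmax_le_fmin_add X.2
  have := Vnkb.fmax_le_fmin_add Y.2
  simp only [Gnkb, fmax_union hX hY, fmin_union hX hY]
  exact and_congr_right fun _ => by omega

lemma edist_le_one (hk : 0 < k) (hmin : fmin X.1 ≤ fmin Y.1) (hmax : fmax Y.1 ≤ fmin X.1 + b) :
    (Gnkb n k b).edist X Y ≤ 1 := by
  have := Vnkb.fmax_le_fmin_add X.2
  rw [SimpleGraph.edist_le_one_iff_adj_or_eq, adj_iff hk]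
  by_cases h : X = Y
  · exact Or.inr h
  · exact Or.inl ⟨h, hmax, by omega⟩

lemma fmin_le_of_adj (hk : 0 < k) (h : (Gnkb n k b).Adj X Y) :
    fmin Y.1 ≤ fmin X.1 + (b + 1 - k) := by
  have := (adj_iff hk).1 h
  have := Vnkb.fmin_add_le_fmax hk Y.2
  omega

lemma fmin_le_of_walk (hk : 0 < k) (w : (Gnkb n k b).Walk X Y) :
    fmin Y.1 ≤ fmin X.1 + w.length * (b + 1 - k) := by
  induction w with
  | nil => simp
  | cons h _ ih =>
    have := fmin_le_of_adj hk h
    rw [SimpleGraph.Walk.length_cons, add_one_mul]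
    omega

lemma edist_le_of_fmax_lt (hk : 0 < k) (j : ℕ) (hmin : fmin X.1 ≤ fmin Y.1)
    (hmax : fmax Y.1 < fmin X.1 + k + (j + 1) * (b + 1 - k)) :
    (Gnkb n k b).edist X Y ≤ j + 1 := by
  have hXk := Vnkb.fmin_add_le_fmax hk X.2
  have hXb := Vnkb.fmax_le_fmin_add X.2
  induction j generalizing X with
  | zero =>
    simpa using edist_le_one hk hmin (by omega)
  | succ j ih =>
    have hYk := Vnkb.fmin_add_le_fmax hk Y.2
    have hYb := Vnkb.fmax_le_fmin_add Y.2
    have hYn := Vnkb.fmax_le hk Y.2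
    -- step to the interval `[s, s+k-1]`, with `s` advanced by `b + 1 - k` but not past `min Y`
    obtain ⟨s, hs⟩ : ∃ s, s = min (fmin X.1 + (b + 1 - k)) (fmin Y.1) := ⟨_, rfl⟩
    obtain ⟨Z, hZmin, hZmax⟩ : ∃ Z : Vnkb n k b, fmin Z.1 = s ∧ fmax Z.1 = s + k - 1 :=
      ⟨⟨Finset.Icc s (s + k - 1), Vnkb.Icc_mem hk (by omega) (by omega) (by omega)⟩,
        fmin_Icc (by omega), fmax_Icc (by omega)⟩
    have hXZ : (Gnkb n k b).edist X Z ≤ 1 := edist_le_one hk (by omega) (by omega)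
    have hZY : (Gnkb n k b).edist Z Y ≤ j + 1 := by
      refine ih (X := Z) (by omega) ?_ (by omega) (by omega)
      have := Nat.le_mul_of_pos_left (b + 1 - k) (by omega : 0 < j + 1)
      rw [add_one_mul] at hmax
      omega
    calc (Gnkb n k b).edist X Y ≤ (Gnkb n k b).edist X Z + (Gnkb n k b).edist Z Y :=
          SimpleGraph.edist_triangle
      _ ≤ 1 + (j + 1) := add_le_add hXZ hZY
      _ = j + 1 + 1 := add_comm _ _

theorem ediam_le_iff (hk : 0 < k) (hkn : k ≤ n) (hkb : k ≤ b + 1) {L : ℕ} :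
    (Gnkb n k b).ediam ≤ L ↔ n + 1 ≤ k + L * (b + 1 - k) := by
  constructor
  · intro h
    let A : Vnkb n k b := ⟨Finset.Icc 0 (k - 1), Vnkb.Icc_mem hk (by omega) (by omega) (by omega)⟩
    let B : Vnkb n k b := ⟨Finset.Icc (n + 1 - k) n, Vnkb.Icc_mem hk (by omega) le_rfl (by omega)⟩
    have hAB : (Gnkb n k b).edist A B ≤ L := SimpleGraph.edist_le_ediam.trans h
    obtain ⟨p, hp⟩ := SimpleGraph.exists_walk_of_edist_ne_top (ne_top_of_le_ne_top (by simp) hAB)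
    have hpL : p.length ≤ L := by exact_mod_cast hp ▸ hAB
    have hpAB := fmin_le_of_walk hk p
    rw [fmin_Icc (by omega), fmin_Icc (by omega)] at hpAB
    have := Nat.mul_le_mul_right (b + 1 - k) hpL
    omega
  · intro h
    obtain ⟨j, rfl⟩ : ∃ j, L = j + 1 := Nat.exists_eq_succ_of_ne_zero (by rintro rfl; omega)
    refine SimpleGraph.ediam_le_of_edist_le fun X Y => ?_
    have hX := Vnkb.fmax_le hk X.2
    have hY := Vnkb.fmax_le hk Y.2
    push_cast
    rcases le_total (fmin X.1) (fmin Y.1) with hXY | hYX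
    · exact edist_le_of_fmax_lt hk j hXY (by omega)
    · rw [SimpleGraph.edist_comm]
      exact edist_le_of_fmax_lt hk j hYX (by omega)

end Gnkb

theorem diam_Gnkb_general (n k b : ℕ)
    (h1 : 1 ≤ k - 1) (h3 : b ≤ n) (hbk : k ≤ b) :
    ((Gnkb n k b).diam : ℤ) = ⌈((n : ℚ) - (k : ℚ) + 1) / ((b : ℚ) - (k : ℚ) + 1)⌉ := by
  set q : ℚ := ((n : ℚ) - k + 1) / ((b : ℚ) - k + 1)
  have hc : (0 : ℚ) < (b : ℚ) - k + 1 := by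
    have : (k : ℚ) ≤ b := by exact_mod_cast hbk
    linarith
  have hkn : (k : ℚ) ≤ n := by exact_mod_cast hbk.trans h3
  have hq : 0 ≤ q := div_nonneg (by linarith) hc.le
  have key : ∀ L : ℕ, (Gnkb n k b).ediam ≤ L ↔ ⌈q⌉₊ ≤ L := by
    intro L
    rw [Gnkb.ediam_le_iff (by omega) (by omega) (by omega), Nat.ceil_le, div_le_iff₀ hc,
      ← Nat.cast_le (α := ℚ)]
    push_cast [Nat.cast_sub (by omega : k ≤ b + 1)]
    constructor <;> intro <;> linarith
  have hediam : (Gnkb n k b).ediam = ⌈q⌉₊ := by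
    refine le_antisymm ((key _).2 le_rfl) ?_
    have hfin : (Gnkb n k b).ediam ≠ ⊤ := ne_top_of_le_ne_top (by simp) ((key _).2 le_rfl)
    rw [← ENat.natCast_toNat hfin]
    exact_mod_cast (key _).1 (ENat.natCast_toNat hfin).ge
  rw [SimpleGraph.diam, hediam, ENat.toNat_natCast, Int.natCast_ceil_eq_ceil hq]

/-- For `b ≥ k`, the diameter of `G_{n,k,b}` equals `⌈(n-k+1)/(b-k+1)⌉`. -/
theorem diam_Gnkb (n k b : ℕ)
    (h1 : 1 ≤ k - 1) (h2 : k - 1 ≤ b) (h3 : b ≤ n) (hbk : k ≤ b) :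
    ((Gnkb n k b).diam : ℤ) = ⌈((n : ℚ) - (k : ℚ) + 1) / ((b : ℚ) - (k : ℚ) + 1)⌉ :=
  diam_Gnkb_general n k b h1 h3 hbk
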